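/- For every n ≥ 0, the matrix B'_n = U_n B_n V_n is lower anti-triangular (for all I, J ⊆ [n] with r_n(I) + r_n(J) ≤ 2^n, the entry B'_n(I, J) equals 0), and moreover whenever B'_n(I, J) is nonzero, I ⇝ J. -/
import Mathlib


open Finset Polynomial
open scoped Classical

namespace AR

/-- `binVal I = r_n(I) - 1 = Σ_{i ∈ I} 2^(i-1)`. -/
def binVal (I : Finset ℕ) : ℕ := ∑ i ∈ I, 2 ^ (i - 1)

lemma binVal_Icc (m : ℕ) : binVal (Finset.Icc 1 m) = 2 ^ m - 1 := by
  induction m with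
  | zero => simp [binVal]
  | succ k ih =>
      rw [binVal, Finset.sum_Icc_succ_top (by omega)]
      rw [binVal] at ih
      rw [ih]
      have h1 : 1 ≤ 2 ^ k := Nat.one_le_two_pow
      simp only [Nat.add_sub_cancel, pow_succ]
      omega

lemma binVal_lt {n : ℕ} {I : Finset ℕ} (h : I ⊆ Finset.Icc 1 n) : binVal I < 2 ^ n := by
  have h1 : binVal I ≤ binVal (Finset.Icc 1 n) :=
    Finset.sum_le_sum_of_subset h
  have h2 := binVal_Icc n
  have h3 : 1 ≤ 2 ^ n := Nat.one_le_two_pow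
  omega

/-- The row/column index (zero-based, i.e. `r_n(I) - 1`) corresponding to a subset `I ⊆ [n]`. -/
def idx (n : ℕ) (I : Finset ℕ) (h : I ⊆ Finset.Icc 1 n) : Fin (2 ^ n) :=
  ⟨binVal I, binVal_lt h⟩

def blockEquiv (n : ℕ) : Fin (2 ^ n) ⊕ Fin (2 ^ n) ≃ Fin (2 ^ (n + 1)) :=
  finSumFinEquiv.trans (finCongr (by rw [pow_succ, mul_two]))

/-- The pair of Adin–Roichman matrices `(A_n, B_n)`, defined recursively. -/
def ABpair : (n : ℕ) → Matrix (Fin (2 ^ n)) (Fin (2 ^ n)) ℤ × Matrix (Fin (2 ^ n)) (Fin (2 ^ n)) ℤ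
  | 0 => (Matrix.of fun _ _ => 1, Matrix.of fun _ _ => 1)
  | n + 1 =>
      let p := ABpair n
      ((Matrix.reindex (blockEquiv n) (blockEquiv n)) (Matrix.fromBlocks p.1 p.1 p.1 (-p.2)),
       (Matrix.reindex (blockEquiv n) (blockEquiv n)) (Matrix.fromBlocks p.1 p.1 0 (-p.2)))

def A (n : ℕ) : Matrix (Fin (2 ^ n)) (Fin (2 ^ n)) ℤ := (ABpair n).1

def B (n : ℕ) : Matrix (Fin (2 ^ n)) (Fin (2 ^ n)) ℤ := (ABpair n).2

/-- `R` is a (nonempty) integer interval. -/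
def IsInterval (R : Finset ℕ) : Prop := ∃ a b : ℕ, R = Finset.Icc a b

/-- `R` is a run of `I`: a maximal nonempty interval contained in `I`. -/
def IsRun (I R : Finset ℕ) : Prop :=
  R.Nonempty ∧ IsInterval R ∧ R ⊆ I ∧
    ∀ S : Finset ℕ, IsInterval S → S ⊆ I → R ⊆ S → S = R

/-- `R` is a prefix of `S` : `min R = min S` and `R ⊆ S`. -/
def IsPrefixOf (R S : Finset ℕ) : Prop := R.min = S.min ∧ R ⊆ S

/-- `I ≫ J` : every run of `I ∩ J` is a prefix of a run of `I`. -/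
def Gg (I J : Finset ℕ) : Prop :=
  ∀ R : Finset ℕ, IsRun (I ∩ J) R → ∃ S : Finset ℕ, IsRun I S ∧ IsPrefixOf R S

/-- The set of runs of `I`. -/
noncomputable def runs (I : Finset ℕ) : Finset (Finset ℕ) :=
  I.powerset.filter (fun R => IsRun I R)

/-- `π(I)`: the product of (size + 1) over the runs of `I`. -/
noncomputable def piFun (I : Finset ℕ) : ℕ := ∏ R ∈ runs I, (R.card + 1)

/-- `π'_n(I)`: the product of (size + 1) over the runs of `I` not containing `n`. -/
noncomputable def piFun' (n : ℕ) (I : Finset ℕ) : ℕ :=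
  ∏ R ∈ (runs I).filter (fun R => n ∉ R), (R.card + 1)

/-- The subset of `[n]` encoded by a zero-based index `i : Fin (2^n)` (binary digits). -/
def decode (n : ℕ) (i : Fin (2 ^ n)) : Finset ℕ :=
  (Finset.Icc 1 n).filter (fun k => Nat.testBit i.val (k - 1))

/-- The matrix `U_n`, with `U_n(I,J) = 1` if `I ⊇ J` and `0` otherwise. -/
def U (n : ℕ) : Matrix (Fin (2 ^ n)) (Fin (2 ^ n)) ℤ :=
  Matrix.of fun i j => if decode n j ⊆ decode n i then 1 else 0

/-- The matrix `V_n = U_n⁻¹`, with `V_n(I,J) = (-1)^{|I \ J|}` if `I ⊇ J` and `0` otherwise. -/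
def V (n : ℕ) : Matrix (Fin (2 ^ n)) (Fin (2 ^ n)) ℤ :=
  Matrix.of fun i j =>
    if decode n j ⊆ decode n i then (-1) ^ ((decode n i) \ (decode n j)).card else 0

def A' (n : ℕ) : Matrix (Fin (2 ^ n)) (Fin (2 ^ n)) ℤ := U n * A n * V n

def B' (n : ℕ) : Matrix (Fin (2 ^ n)) (Fin (2 ^ n)) ℤ := U n * B n * V n

/-- `E ⪯ I` : `E ⊆ I`, `E` contains no minimal element of a run of `I`,
and `E` contains no two consecutive integers. -/
def SubPrec (E I : Finset ℕ) : Prop :=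
  E ⊆ I ∧ (∀ R : Finset ℕ, (h : IsRun I R) → R.min' h.1 ∉ E) ∧
    ∀ i : ℕ, ¬ (i ∈ E ∧ i + 1 ∈ E)

/-- `I ⇝ J` : `J = ([n] \ I) ∪ E` for some `E ⪯ I`. -/
def Step (n : ℕ) (I J : Finset ℕ) : Prop :=
  ∃ E : Finset ℕ, SubPrec E I ∧ J = (Finset.Icc 1 n \ I) ∪ E

/-- `π_μ` for a composition `μ` of `n`. -/
def piComp {n : ℕ} (μ : Composition n) : ℕ := (μ.blocks.map (· + 1)).prod

/-- `π'_μ` for a composition `μ` of `n`. -/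
def piComp' {n : ℕ} (μ : Composition n) : ℕ := (μ.blocks.dropLast.map (· + 1)).prod

/-- The Thue–Morse sequence: `thueMorse m = s₂(m) % 2`. -/
def thueMorse (m : ℕ) : ℕ := (Nat.digits 2 m).sum % 2

-- ===== auxiliary lemmas =====
lemma blockEquiv_inl_val (n : ℕ) (i : Fin (2 ^ n)) :
    ((blockEquiv n) (Sum.inl i) : Fin (2 ^ (n+1))).val = i.val := by
  simp [blockEquiv]

lemma blockEquiv_inr_val (n : ℕ) (i : Fin (2 ^ n)) :
    ((blockEquiv n) (Sum.inr i) : Fin (2 ^ (n+1))).val = 2 ^ n + i.val := by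
  simp [blockEquiv]
  omega

lemma decode_subset (n : ℕ) (i : Fin (2 ^ n)) : decode n i ⊆ Finset.Icc 1 n :=
  Finset.filter_subset _ _

lemma notMem_decode (n : ℕ) (i : Fin (2 ^ n)) : n + 1 ∉ decode n i := by
  intro h
  have := decode_subset n i h
  simp [Finset.mem_Icc] at this

lemma decode_inl (n : ℕ) (i : Fin (2 ^ n)) :
    decode (n+1) ((blockEquiv n) (Sum.inl i)) = decode n i := by
  ext k
  simp only [decode, Finset.mem_filter, Finset.mem_Icc, blockEquiv_inl_val]
  constructor
  · rintro ⟨⟨h1, h2⟩, h3⟩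
    refine ⟨⟨h1, ?_⟩, h3⟩
    rcases Nat.lt_or_ge k (n+1) with h | h
    · omega
    · exfalso
      have hk : k = n + 1 := by omega
      subst hk
      rw [show n + 1 - 1 = n from rfl] at h3
      rw [Nat.testBit_lt_two_pow i.isLt] at h3
      exact Bool.false_ne_true h3
  · rintro ⟨⟨h1, h2⟩, h3⟩
    exact ⟨⟨h1, by omega⟩, h3⟩

lemma decode_inr (n : ℕ) (i : Fin (2 ^ n)) :
    decode (n+1) ((blockEquiv n) (Sum.inr i)) = insert (n+1) (decode n i) := by
  ext k
  simp only [decode, Finset.mem_filter, Finset.mem_Icc, Finset.mem_insert, blockEquiv_inr_val]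
  constructor
  · rintro ⟨⟨h1, h2⟩, h3⟩
    rcases eq_or_ne k (n+1) with h | h
    · exact Or.inl h
    · refine Or.inr ⟨⟨h1, by omega⟩, ?_⟩
      rwa [Nat.testBit_two_pow_add_gt (by omega) i.val] at h3
  · rintro (h | ⟨⟨h1, h2⟩, h3⟩)
    · subst h
      refine ⟨⟨by omega, le_rfl⟩, ?_⟩
      rw [show n + 1 - 1 = n from rfl, Nat.testBit_two_pow_add_eq,
        Nat.testBit_lt_two_pow i.isLt]
      rfl
    · exact ⟨⟨h1, by omega⟩, by rwa [Nat.testBit_two_pow_add_gt (by omega) i.val]⟩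

lemma subset_Icc_of_not_mem {n : ℕ} {I : Finset ℕ} (hI : I ⊆ Finset.Icc 1 (n+1))
    (h : n + 1 ∉ I) : I ⊆ Finset.Icc 1 n := by
  intro x hx
  have := hI hx
  simp only [Finset.mem_Icc] at this ⊢
  refine ⟨this.1, ?_⟩
  rcases eq_or_ne x (n+1) with h' | h'
  · exact absurd (h' ▸ hx) h
  · omega

lemma erase_subset_Icc {n : ℕ} {I : Finset ℕ} (hI : I ⊆ Finset.Icc 1 (n+1)) :
    I.erase (n+1) ⊆ Finset.Icc 1 n :=
  subset_Icc_of_not_mem (fun x hx => hI (Finset.erase_subset _ _ hx))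
    (Finset.notMem_erase _ _)

lemma idx_inl {n : ℕ} {I : Finset ℕ} (hI : I ⊆ Finset.Icc 1 (n+1)) (h : n + 1 ∉ I)
    (hI' : I ⊆ Finset.Icc 1 n) :
    idx (n+1) I hI = (blockEquiv n) (Sum.inl (idx n I hI')) := by
  apply Fin.ext
  rw [blockEquiv_inl_val]
  rfl

lemma binVal_erase {n : ℕ} {I : Finset ℕ} (h : n + 1 ∈ I) :
    binVal I = 2 ^ n + binVal (I.erase (n+1)) := by
  unfold binVal
  rw [← Finset.add_sum_erase _ _ h]
  norm_num

lemma idx_inr {n : ℕ} {I : Finset ℕ} (hI : I ⊆ Finset.Icc 1 (n+1)) (h : n + 1 ∈ I)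
    (hI' : I.erase (n+1) ⊆ Finset.Icc 1 n) :
    idx (n+1) I hI = (blockEquiv n) (Sum.inr (idx n (I.erase (n+1)) hI')) := by
  apply Fin.ext
  rw [blockEquiv_inr_val]
  exact binVal_erase h
lemma U_succ (n : ℕ) : U (n+1) =
    (Matrix.reindex (blockEquiv n) (blockEquiv n))
      (Matrix.fromBlocks (U n) 0 (U n) (U n)) := by
  apply Matrix.ext
  intro x y
  obtain ⟨s, rfl⟩ := (blockEquiv n).surjective x
  obtain ⟨t, rfl⟩ := (blockEquiv n).surjective y
  rw [Matrix.reindex_apply, Matrix.submatrix_apply, Equiv.symm_apply_apply,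
    Equiv.symm_apply_apply]
  rcases s with i | i <;> rcases t with j | j <;>
    simp only [U, Matrix.of_apply, decode_inl, decode_inr, Matrix.fromBlocks_apply₁₁,
      Matrix.fromBlocks_apply₁₂, Matrix.fromBlocks_apply₂₁, Matrix.fromBlocks_apply₂₂,
      Matrix.zero_apply]
  · rw [if_neg]
    intro hsub
    exact notMem_decode n i (hsub (Finset.mem_insert_self _ _))
  · simp only [Finset.subset_insert_iff_of_notMem (notMem_decode n j)]
  · simp only [Finset.insert_subset_insert_iff (notMem_decode n j)]

lemma sdiff_insert_insert {a : ℕ} {A B : Finset ℕ} (ha : a ∉ A) (hb : a ∉ B) :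
    (insert a A) \ (insert a B) = A \ B := by
  ext x
  simp only [Finset.mem_sdiff, Finset.mem_insert]
  constructor
  · rintro ⟨h1 | h1, h2⟩
    · exact absurd (Or.inl h1) h2
    · exact ⟨h1, fun hx => h2 (Or.inr hx)⟩
  · rintro ⟨h1, h2⟩
    exact ⟨Or.inr h1, by rintro (rfl | hx); exacts [ha h1, h2 hx]⟩

lemma sdiff_insert_left {a : ℕ} {A B : Finset ℕ} (ha : a ∉ A) (hb : a ∉ B) :
    (insert a A) \ B = insert a (A \ B) := by
  rw [Finset.insert_sdiff_of_notMem _ hb]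

lemma V_succ (n : ℕ) : V (n+1) =
    (Matrix.reindex (blockEquiv n) (blockEquiv n))
      (Matrix.fromBlocks (V n) 0 (-(V n)) (V n)) := by
  apply Matrix.ext
  intro x y
  obtain ⟨s, rfl⟩ := (blockEquiv n).surjective x
  obtain ⟨t, rfl⟩ := (blockEquiv n).surjective y
  rw [Matrix.reindex_apply, Matrix.submatrix_apply, Equiv.symm_apply_apply,
    Equiv.symm_apply_apply]
  rcases s with i | i <;> rcases t with j | j <;>
    simp only [V, Matrix.of_apply, decode_inl, decode_inr, Matrix.fromBlocks_apply₁₁,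
      Matrix.fromBlocks_apply₁₂, Matrix.fromBlocks_apply₂₁, Matrix.fromBlocks_apply₂₂,
      Matrix.zero_apply, Matrix.neg_apply]
  · rw [if_neg]
    intro hsub
    exact notMem_decode n i (hsub (Finset.mem_insert_self _ _))
  · simp only [Finset.subset_insert_iff_of_notMem (notMem_decode n j)]
    by_cases h : decode n j ⊆ decode n i
    · rw [if_pos h, if_pos h,
        sdiff_insert_left (notMem_decode n i) (notMem_decode n j),
        Finset.card_insert_of_notMem (by
          simp only [Finset.mem_sdiff, not_and]
          intro hx; exact absurd hx (notMem_decode n i)), pow_succ]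
      ring
    · rw [if_neg h, if_neg h, neg_zero]
  · simp only [Finset.insert_subset_insert_iff (notMem_decode n j)]
    by_cases h : decode n j ⊆ decode n i
    · rw [if_pos h, if_pos h,
        sdiff_insert_insert (notMem_decode n i) (notMem_decode n j)]
    · rw [if_neg h, if_neg h]

lemma reindex_mul {n : ℕ} (M N : Matrix (Fin (2^n) ⊕ Fin (2^n)) (Fin (2^n) ⊕ Fin (2^n)) ℤ) :
    (Matrix.reindex (blockEquiv n) (blockEquiv n)) M *
      (Matrix.reindex (blockEquiv n) (blockEquiv n)) N =
    (Matrix.reindex (blockEquiv n) (blockEquiv n)) (M * N) := by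
  rw [Matrix.reindex_apply, Matrix.reindex_apply, Matrix.reindex_apply,
    Matrix.submatrix_mul_equiv]

lemma B'_succ (n : ℕ) : B' (n+1) =
    (Matrix.reindex (blockEquiv n) (blockEquiv n))
      (Matrix.fromBlocks 0 (A' n) (B' n) (A' n - B' n)) := by
  have hB : B (n+1) = (Matrix.reindex (blockEquiv n) (blockEquiv n))
      (Matrix.fromBlocks (A n) (A n) 0 (-(B n))) := rfl
  rw [B', U_succ, hB, V_succ, reindex_mul, reindex_mul,
    Matrix.fromBlocks_multiply, Matrix.fromBlocks_multiply]
  refine congrArg _ ?_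
  rw [Matrix.fromBlocks_inj]
  refine ⟨?_, ?_, ?_, ?_⟩
  all_goals first
    | (simp only [A', B']; noncomm_ring)
    | noncomm_ring

lemma A'_succ (n : ℕ) : A' (n+1) =
    (Matrix.reindex (blockEquiv n) (blockEquiv n))
      (Matrix.fromBlocks 0 (A' n) (A' n + B' n) (A' n - B' n)) := by
  have hA : A (n+1) = (Matrix.reindex (blockEquiv n) (blockEquiv n))
      (Matrix.fromBlocks (A n) (A n) (A n) (-(B n))) := rfl
  rw [A', U_succ, hA, V_succ, reindex_mul, reindex_mul,
    Matrix.fromBlocks_multiply, Matrix.fromBlocks_multiply]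
  refine congrArg _ ?_
  rw [Matrix.fromBlocks_inj]
  refine ⟨?_, ?_, ?_, ?_⟩
  all_goals first
    | (simp only [A', B']; noncomm_ring)
    | noncomm_ring
lemma B'_apply_inl_inl (n : ℕ) (i j : Fin (2 ^ n)) :
    B' (n+1) ((blockEquiv n) (Sum.inl i)) ((blockEquiv n) (Sum.inl j)) = 0 := by
  rw [B'_succ]
  simp [Matrix.reindex_apply, Matrix.submatrix_apply]

lemma B'_apply_inl_inr (n : ℕ) (i j : Fin (2 ^ n)) :
    B' (n+1) ((blockEquiv n) (Sum.inl i)) ((blockEquiv n) (Sum.inr j)) = A' n i j := by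
  rw [B'_succ]
  simp [Matrix.reindex_apply, Matrix.submatrix_apply]

lemma B'_apply_inr_inl (n : ℕ) (i j : Fin (2 ^ n)) :
    B' (n+1) ((blockEquiv n) (Sum.inr i)) ((blockEquiv n) (Sum.inl j)) = B' n i j := by
  rw [B'_succ]
  simp [Matrix.reindex_apply, Matrix.submatrix_apply]

lemma B'_apply_inr_inr (n : ℕ) (i j : Fin (2 ^ n)) :
    B' (n+1) ((blockEquiv n) (Sum.inr i)) ((blockEquiv n) (Sum.inr j)) =
      A' n i j - B' n i j := by
  rw [B'_succ]
  simp [Matrix.reindex_apply, Matrix.submatrix_apply]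

lemma A'_apply_inl_inl (n : ℕ) (i j : Fin (2 ^ n)) :
    A' (n+1) ((blockEquiv n) (Sum.inl i)) ((blockEquiv n) (Sum.inl j)) = 0 := by
  rw [A'_succ]
  simp [Matrix.reindex_apply, Matrix.submatrix_apply]

lemma A'_apply_inl_inr (n : ℕ) (i j : Fin (2 ^ n)) :
    A' (n+1) ((blockEquiv n) (Sum.inl i)) ((blockEquiv n) (Sum.inr j)) = A' n i j := by
  rw [A'_succ]
  simp [Matrix.reindex_apply, Matrix.submatrix_apply]

lemma A'_apply_inr_inl (n : ℕ) (i j : Fin (2 ^ n)) :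
    A' (n+1) ((blockEquiv n) (Sum.inr i)) ((blockEquiv n) (Sum.inl j)) =
      A' n i j + B' n i j := by
  rw [A'_succ]
  simp [Matrix.reindex_apply, Matrix.submatrix_apply]

lemma A'_apply_inr_inr (n : ℕ) (i j : Fin (2 ^ n)) :
    A' (n+1) ((blockEquiv n) (Sum.inr i)) ((blockEquiv n) (Sum.inr j)) =
      A' n i j - B' n i j := by
  rw [A'_succ]
  simp [Matrix.reindex_apply, Matrix.submatrix_apply]

lemma A'_zero_eq : A' 0 = B' 0 := rfl
lemma min'_Icc {a b : ℕ} (h : a ≤ b) (hne : (Finset.Icc a b).Nonempty) :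
    (Finset.Icc a b).min' hne = a := by
  apply le_antisymm
  · exact Finset.min'_le _ a (Finset.mem_Icc.mpr ⟨le_rfl, h⟩)
  · exact Finset.le_min' _ _ _ (fun y hy => (Finset.mem_Icc.mp hy).1)

lemma run_min_spec {I R : Finset ℕ} (h0 : 0 ∉ I) (h : IsRun I R) :
    R.min' h.1 ∈ I ∧ R.min' h.1 - 1 ∉ I := by
  obtain ⟨hne, ⟨a, b, rfl⟩, hsub, hmax⟩ := h
  have hab : a ≤ b := by
    obtain ⟨x, hx⟩ := hne
    have := Finset.mem_Icc.mp hx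
    omega
  have hmin : (Finset.Icc a b).min' hne = a := min'_Icc hab hne
  have haI : a ∈ I := hsub (Finset.mem_Icc.mpr ⟨le_rfl, hab⟩)
  have ha1 : 1 ≤ a := by
    rcases Nat.eq_zero_or_pos a with h | h
    · exact absurd (h ▸ haI) h0
    · exact h
  simp only [hmin]
  refine ⟨haI, fun hcon => ?_⟩
  have hS : Finset.Icc (a-1) b ⊆ I := by
    intro x hx
    have hx' := Finset.mem_Icc.mp hx
    by_cases hxa : x = a - 1
    · exact hxa ▸ hcon
    · exact hsub (Finset.mem_Icc.mpr ⟨by omega, hx'.2⟩)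
  have := hmax (Finset.Icc (a-1) b) ⟨a-1, b, rfl⟩ hS
    (Finset.Icc_subset_Icc (by omega) le_rfl)
  have : a - 1 ∈ Finset.Icc a b := by
    rw [← this]; exact Finset.mem_Icc.mpr ⟨le_rfl, by omega⟩
  have := Finset.mem_Icc.mp this
  omega

lemma exists_run_min {I : Finset ℕ} (h0 : 0 ∉ I) {a : ℕ} (ha : a ∈ I)
    (ha' : a - 1 ∉ I) : ∃ R, ∃ h : IsRun I R, R.min' h.1 = a := by
  have hex : ∃ x, a ≤ x ∧ x + 1 ∉ I := by
    refine ⟨a + I.sup id, by omega, fun hcon => ?_⟩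
    have := Finset.le_sup (f := id) hcon
    simp only [id] at this
    omega
  set b := Nat.find hex with hbdef
  have hb : a ≤ b ∧ b + 1 ∉ I := Nat.find_spec hex
  have hIcc : ∀ k, a + k ≤ b → a + k ∈ I := by
    intro k
    induction k with
    | zero => intro _; simpa using ha
    | succ k ih =>
        intro hk
        have h1 : a + k ∈ I := ih (by omega)
        by_contra hcon
        have : ¬ (a ≤ a + k ∧ a + k + 1 ∉ I) := Nat.find_min hex (by omega)
        push_neg at this
        exact hcon (this (by omega))
  have hsub : Finset.Icc a b ⊆ I := by
    intro x hx
    have hx' := Finset.mem_Icc.mp hx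
    obtain ⟨k, rfl⟩ : ∃ k, x = a + k := ⟨x - a, by omega⟩
    exact hIcc k (by omega)
  have hne : (Finset.Icc a b).Nonempty := Finset.nonempty_Icc.mpr hb.1
  have ha1 : 1 ≤ a := by
    rcases Nat.eq_zero_or_pos a with h | h
    · exact absurd (h ▸ ha) h0
    · exact h
  have hrun : IsRun I (Finset.Icc a b) := by
    refine ⟨hne, ⟨a, b, rfl⟩, hsub, ?_⟩
    rintro S ⟨a', b', rfl⟩ hS hRS
    have haa : a ∈ Finset.Icc a' b' := hRS (Finset.mem_Icc.mpr ⟨le_rfl, hb.1⟩)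
    have hbb : b ∈ Finset.Icc a' b' := hRS (Finset.mem_Icc.mpr ⟨hb.1, le_rfl⟩)
    have haa' := Finset.mem_Icc.mp haa
    have hbb' := Finset.mem_Icc.mp hbb
    have ha'a : a' = a := by
      by_contra hcon
      have : a - 1 ∈ Finset.Icc a' b' := Finset.mem_Icc.mpr ⟨by omega, by omega⟩
      exact ha' (hS this)
    have hb'b : b' = b := by
      by_contra hcon
      have : b + 1 ∈ Finset.Icc a' b' := Finset.mem_Icc.mpr ⟨by omega, by omega⟩
      exact hb.2 (hS this)
    rw [ha'a, hb'b]
  exact ⟨Finset.Icc a b, hrun, min'_Icc hb.1 _⟩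

lemma subPrec_notMem_min {I E : Finset ℕ} (h : SubPrec E I) (h0 : 0 ∉ I) {a : ℕ}
    (ha : a ∈ I) (ha' : a - 1 ∉ I) : a ∉ E := by
  obtain ⟨R, hr, hmin⟩ := exists_run_min h0 ha ha'
  have := h.2.1 R hr
  rwa [hmin] at this

lemma subPrec_up {I E : Finset ℕ} {m : ℕ} (hm : m ∈ I) (h0 : 0 ∉ I)
    (hmax : ∀ x ∈ I, x ≤ m) (hE : SubPrec E (I.erase m)) (hmE : m ∉ E) :
    SubPrec E I := by
  refine ⟨hE.1.trans (Finset.erase_subset _ _), ?_, hE.2.2⟩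
  intro R hR
  obtain ⟨hmem, hpred⟩ := run_min_spec h0 hR
  by_cases hx : R.min' hR.1 = m
  · rw [hx]; exact hmE
  · refine subPrec_notMem_min hE (fun h => h0 (Finset.erase_subset _ _ h))
      (Finset.mem_erase.mpr ⟨hx, hmem⟩) (fun h => hpred (Finset.erase_subset _ _ h))

lemma subPrec_insert_up {I E : Finset ℕ} {m : ℕ} (hm : m ∈ I) (hm1 : m - 1 ∈ I)
    (h0 : 0 ∉ I) (hmax : ∀ x ∈ I, x ≤ m) (hE : SubPrec E (I.erase m)) (hmE : m ∉ E)
    (hm1E : m - 1 ∉ E) : SubPrec (insert m E) I := by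
  have hm0 : 1 ≤ m := by
    rcases Nat.eq_zero_or_pos m with h | h
    · exact absurd (h ▸ hm) h0
    · exact h
  have hEsub : E ⊆ I := hE.1.trans (Finset.erase_subset _ _)
  refine ⟨Finset.insert_subset hm hEsub, ?_, ?_⟩
  · intro R hR
    obtain ⟨hmem, hpred⟩ := run_min_spec h0 hR
    have hxm : R.min' hR.1 ≠ m := by
      intro hcon
      rw [hcon] at hpred
      exact hpred hm1
    have hxE : R.min' hR.1 ∉ E :=
      subPrec_notMem_min hE (fun h => h0 (Finset.erase_subset _ _ h))
        (Finset.mem_erase.mpr ⟨hxm, hmem⟩) (fun h => hpred (Finset.erase_subset _ _ h))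
    simp only [Finset.mem_insert, not_or]
    exact ⟨hxm, hxE⟩
  · rintro i ⟨hi, hi1⟩
    rw [Finset.mem_insert] at hi hi1
    rcases hi with rfl | hi
    · rcases hi1 with h | h
      · omega
      · have := hmax _ (hEsub h)
        omega
    · rcases hi1 with h | h
      · have : i = m - 1 := by omega
        exact hm1E (this ▸ hi)
      · exact hE.2.2 i ⟨hi, h⟩
lemma sdiff_Icc_of_notMem {n : ℕ} {I : Finset ℕ} (h : n + 1 ∉ I) :
    Finset.Icc 1 (n+1) \ I = insert (n+1) (Finset.Icc 1 n \ I) := by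
  ext x
  simp only [Finset.mem_sdiff, Finset.mem_Icc, Finset.mem_insert]
  constructor
  · rintro ⟨⟨h1, h2⟩, h3⟩
    rcases eq_or_ne x (n+1) with h' | h'
    · exact Or.inl h'
    · exact Or.inr ⟨⟨h1, by omega⟩, h3⟩
  · rintro (rfl | ⟨⟨h1, h2⟩, h3⟩)
    · exact ⟨⟨by omega, le_rfl⟩, h⟩
    · exact ⟨⟨h1, by omega⟩, h3⟩

lemma sdiff_Icc_of_mem {n : ℕ} {I : Finset ℕ} (h : n + 1 ∈ I) :
    Finset.Icc 1 (n+1) \ I = Finset.Icc 1 n \ I.erase (n+1) := by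
  ext x
  simp only [Finset.mem_sdiff, Finset.mem_Icc, Finset.mem_erase]
  constructor
  · rintro ⟨⟨h1, h2⟩, h3⟩
    have : x ≠ n + 1 := fun hc => h3 (hc ▸ h)
    exact ⟨⟨h1, by omega⟩, fun hc => h3 hc.2⟩
  · rintro ⟨⟨h1, h2⟩, h3⟩
    refine ⟨⟨h1, by omega⟩, fun hc => h3 ⟨by omega, hc⟩⟩

lemma not_succ_mem_of_subPrec_erase {n : ℕ} {I E : Finset ℕ}
    (hI : I ⊆ Finset.Icc 1 (n+1)) (hE : E ⊆ I.erase (n+1)) : n + 1 ∉ E := by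
  intro h
  have := (erase_subset_Icc hI) (hE h)
  simp [Finset.mem_Icc] at this

lemma step_top {n : ℕ} {I J : Finset ℕ} (hIn : n + 1 ∉ I) (hJn : n + 1 ∈ J)
    (h : Step n I (J.erase (n+1))) : Step (n+1) I J := by
  obtain ⟨E, hE, hJ'⟩ := h
  refine ⟨E, hE, ?_⟩
  rw [sdiff_Icc_of_notMem hIn, Finset.insert_union, ← hJ', Finset.insert_erase hJn]

lemma step_bl {n : ℕ} {I J : Finset ℕ} (hI : I ⊆ Finset.Icc 1 (n+1)) (hIn : n + 1 ∈ I)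
    (h : Step n (I.erase (n+1)) J) : Step (n+1) I J := by
  obtain ⟨E, hE, hJ'⟩ := h
  have h0 : 0 ∉ I := fun hc => by simpa using Finset.mem_Icc.mp (hI hc)
  refine ⟨E, subPrec_up hIn h0 (fun x hx => (Finset.mem_Icc.mp (hI hx)).2) hE
    (not_succ_mem_of_subPrec_erase hI hE.1), ?_⟩
  rw [sdiff_Icc_of_mem hIn, ← hJ']

lemma step_br {n : ℕ} {I J : Finset ℕ} (hI : I ⊆ Finset.Icc 1 (n+1)) (hIn : n + 1 ∈ I)
    (hnI : n ∈ I) (hJn : n + 1 ∈ J) {E : Finset ℕ} (hE : SubPrec E (I.erase (n+1)))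
    (hnE : n ∉ E) (hJ' : J.erase (n+1) = (Finset.Icc 1 n \ I.erase (n+1)) ∪ E) :
    Step (n+1) I J := by
  have h0 : 0 ∉ I := fun hc => by simpa using Finset.mem_Icc.mp (hI hc)
  have hn1E : n + 1 ∉ E := not_succ_mem_of_subPrec_erase hI hE.1
  refine ⟨insert (n+1) E, ?_, ?_⟩
  · exact subPrec_insert_up hIn (by simpa using hnI) h0
      (fun x hx => (Finset.mem_Icc.mp (hI hx)).2) hE hn1E (by simpa using hnE)
  · rw [sdiff_Icc_of_mem hIn, Finset.union_insert, ← hJ', Finset.insert_erase hJn]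
lemma key (n : ℕ) :
    (∀ (I J : Finset ℕ) (hI : I ⊆ Finset.Icc 1 n) (hJ : J ⊆ Finset.Icc 1 n),
      (1 + binVal I) + (1 + binVal J) ≤ 2 ^ n → A' n (idx n I hI) (idx n J hJ) = 0) ∧
    (∀ (I J : Finset ℕ) (hI : I ⊆ Finset.Icc 1 n) (hJ : J ⊆ Finset.Icc 1 n),
      (1 + binVal I) + (1 + binVal J) ≤ 2 ^ n → B' n (idx n I hI) (idx n J hJ) = 0) ∧
    (∀ (I J : Finset ℕ) (hI : I ⊆ Finset.Icc 1 n) (hJ : J ⊆ Finset.Icc 1 n),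
      A' n (idx n I hI) (idx n J hJ) ≠ 0 → Step n I J) ∧
    (∀ (I J : Finset ℕ) (hI : I ⊆ Finset.Icc 1 n) (hJ : J ⊆ Finset.Icc 1 n),
      B' n (idx n I hI) (idx n J hJ) ≠ 0 → Step n I J) ∧
    (∀ (I J : Finset ℕ) (hI : I ⊆ Finset.Icc 1 n) (hJ : J ⊆ Finset.Icc 1 n),
      A' n (idx n I hI) (idx n J hJ) ≠ B' n (idx n I hI) (idx n J hJ) →
        ∃ E, SubPrec E I ∧ n ∈ I ∧ n ∉ E ∧ J = (Finset.Icc 1 n \ I) ∪ E) := by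
  induction n with
  | zero =>
      have hIcc : Finset.Icc 1 0 = (∅ : Finset ℕ) := by simp
      have hstep : ∀ (I J : Finset ℕ), I ⊆ Finset.Icc 1 0 → J ⊆ Finset.Icc 1 0 →
          Step 0 I J := by
        intro I J hI hJ
        rw [hIcc] at hI hJ
        have hI0 : I = ∅ := Finset.subset_empty.mp hI
        have hJ0 : J = ∅ := Finset.subset_empty.mp hJ
        subst hI0; subst hJ0
        exact ⟨∅, ⟨Finset.Subset.refl _, fun R h => Finset.notMem_empty _,
          fun i hi => Finset.notMem_empty i hi.1⟩, by simp⟩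
      refine ⟨?_, ?_, ?_, ?_, ?_⟩
      · intro I J hI hJ hc; rw [pow_zero] at hc; omega
      · intro I J hI hJ hc; rw [pow_zero] at hc; omega
      · intro I J hI hJ _; exact hstep I J hI hJ
      · intro I J hI hJ _; exact hstep I J hI hJ
      · intro I J hI hJ hne
        rw [A'_zero_eq] at hne
        exact absurd rfl hne
  | succ n ih =>
      obtain ⟨ta, tb, sa, sb, sd⟩ := ih
      have h2 : (2:ℕ) ^ (n+1) = 2 ^ n * 2 := pow_succ 2 n
      refine ⟨?_, ?_, ?_, ?_, ?_⟩
      -- TA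
      · intro I J hI hJ hc
        by_cases hIn : n + 1 ∈ I <;> by_cases hJn : n + 1 ∈ J
        · exfalso
          have e1 := binVal_erase hIn
          have e2 := binVal_erase hJn
          omega
        · rw [idx_inr hI hIn (erase_subset_Icc hI),
            idx_inl hJ hJn (subset_Icc_of_not_mem hJ hJn), A'_apply_inr_inl]
          have e1 := binVal_erase hIn
          have hc' : (1 + binVal (I.erase (n+1))) + (1 + binVal J) ≤ 2 ^ n := by omega
          rw [ta _ _ _ _ hc', tb _ _ _ _ hc', add_zero]
        · rw [idx_inl hI hIn (subset_Icc_of_not_mem hI hIn),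
            idx_inr hJ hJn (erase_subset_Icc hJ), A'_apply_inl_inr]
          have e2 := binVal_erase hJn
          exact ta _ _ _ _ (by omega)
        · rw [idx_inl hI hIn (subset_Icc_of_not_mem hI hIn),
            idx_inl hJ hJn (subset_Icc_of_not_mem hJ hJn), A'_apply_inl_inl]
      -- TB
      · intro I J hI hJ hc
        by_cases hIn : n + 1 ∈ I <;> by_cases hJn : n + 1 ∈ J
        · exfalso
          have e1 := binVal_erase hIn
          have e2 := binVal_erase hJn
          omega
        · rw [idx_inr hI hIn (erase_subset_Icc hI),
            idx_inl hJ hJn (subset_Icc_of_not_mem hJ hJn), B'_apply_inr_inl]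
          have e1 := binVal_erase hIn
          exact tb _ _ _ _ (by omega)
        · rw [idx_inl hI hIn (subset_Icc_of_not_mem hI hIn),
            idx_inr hJ hJn (erase_subset_Icc hJ), B'_apply_inl_inr]
          have e2 := binVal_erase hJn
          exact ta _ _ _ _ (by omega)
        · rw [idx_inl hI hIn (subset_Icc_of_not_mem hI hIn),
            idx_inl hJ hJn (subset_Icc_of_not_mem hJ hJn), B'_apply_inl_inl]
      -- SA
      · intro I J hI hJ hne
        by_cases hIn : n + 1 ∈ I <;> by_cases hJn : n + 1 ∈ J
        · rw [idx_inr hI hIn (erase_subset_Icc hI),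
            idx_inr hJ hJn (erase_subset_Icc hJ), A'_apply_inr_inr] at hne
          obtain ⟨E, hE, hnI', hnE, hJ'⟩ := sd _ _ _ _ (sub_ne_zero.mp hne)
          exact step_br hI hIn (Finset.mem_of_mem_erase hnI') hJn hE hnE hJ'
        · rw [idx_inr hI hIn (erase_subset_Icc hI),
            idx_inl hJ hJn (subset_Icc_of_not_mem hJ hJn), A'_apply_inr_inl] at hne
          have : A' n (idx n (I.erase (n+1)) (erase_subset_Icc hI))
              (idx n J (subset_Icc_of_not_mem hJ hJn)) ≠ 0 ∨
              B' n (idx n (I.erase (n+1)) (erase_subset_Icc hI))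
              (idx n J (subset_Icc_of_not_mem hJ hJn)) ≠ 0 := by
            by_contra h
            push_neg at h
            rw [h.1, h.2, add_zero] at hne
            exact hne rfl
          rcases this with h | h
          · exact step_bl hI hIn (sa _ _ _ _ h)
          · exact step_bl hI hIn (sb _ _ _ _ h)
        · rw [idx_inl hI hIn (subset_Icc_of_not_mem hI hIn),
            idx_inr hJ hJn (erase_subset_Icc hJ), A'_apply_inl_inr] at hne
          exact step_top hIn hJn (sa _ _ _ _ hne)
        · rw [idx_inl hI hIn (subset_Icc_of_not_mem hI hIn),
            idx_inl hJ hJn (subset_Icc_of_not_mem hJ hJn), A'_apply_inl_inl] at hne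
          exact absurd rfl hne
      -- SB
      · intro I J hI hJ hne
        by_cases hIn : n + 1 ∈ I <;> by_cases hJn : n + 1 ∈ J
        · rw [idx_inr hI hIn (erase_subset_Icc hI),
            idx_inr hJ hJn (erase_subset_Icc hJ), B'_apply_inr_inr] at hne
          obtain ⟨E, hE, hnI', hnE, hJ'⟩ := sd _ _ _ _ (sub_ne_zero.mp hne)
          exact step_br hI hIn (Finset.mem_of_mem_erase hnI') hJn hE hnE hJ'
        · rw [idx_inr hI hIn (erase_subset_Icc hI),
            idx_inl hJ hJn (subset_Icc_of_not_mem hJ hJn), B'_apply_inr_inl] at hne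
          exact step_bl hI hIn (sb _ _ _ _ hne)
        · rw [idx_inl hI hIn (subset_Icc_of_not_mem hI hIn),
            idx_inr hJ hJn (erase_subset_Icc hJ), B'_apply_inl_inr] at hne
          exact step_top hIn hJn (sa _ _ _ _ hne)
        · rw [idx_inl hI hIn (subset_Icc_of_not_mem hI hIn),
            idx_inl hJ hJn (subset_Icc_of_not_mem hJ hJn), B'_apply_inl_inl] at hne
          exact absurd rfl hne
      -- SD
      · intro I J hI hJ hne
        by_cases hIn : n + 1 ∈ I <;> by_cases hJn : n + 1 ∈ J
        · rw [idx_inr hI hIn (erase_subset_Icc hI),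
            idx_inr hJ hJn (erase_subset_Icc hJ), A'_apply_inr_inr,
            B'_apply_inr_inr] at hne
          exact absurd rfl hne
        · rw [idx_inr hI hIn (erase_subset_Icc hI),
            idx_inl hJ hJn (subset_Icc_of_not_mem hJ hJn), A'_apply_inr_inl,
            B'_apply_inr_inl] at hne
          have hA : A' n (idx n (I.erase (n+1)) (erase_subset_Icc hI))
              (idx n J (subset_Icc_of_not_mem hJ hJn)) ≠ 0 := by
            intro h
            rw [h, zero_add] at hne
            exact hne rfl
          obtain ⟨E, hE, hJ'⟩ := sa _ _ _ _ hA
          have h0 : 0 ∉ I := fun hc => by simpa using Finset.mem_Icc.mp (hI hc)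
          refine ⟨E, subPrec_up hIn h0 (fun x hx => (Finset.mem_Icc.mp (hI hx)).2) hE
            (not_succ_mem_of_subPrec_erase hI hE.1), hIn,
            not_succ_mem_of_subPrec_erase hI hE.1, ?_⟩
          rw [sdiff_Icc_of_mem hIn]
          exact hJ'
        · rw [idx_inl hI hIn (subset_Icc_of_not_mem hI hIn),
            idx_inr hJ hJn (erase_subset_Icc hJ), A'_apply_inl_inr,
            B'_apply_inl_inr] at hne
          exact absurd rfl hne
        · rw [idx_inl hI hIn (subset_Icc_of_not_mem hI hIn),
            idx_inl hJ hJn (subset_Icc_of_not_mem hJ hJn), A'_apply_inl_inl,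
            B'_apply_inl_inl] at hne
          exact absurd rfl hne

theorem stmt15 (n : ℕ) :
    (∀ (I J : Finset ℕ) (hI : I ⊆ Finset.Icc 1 n) (hJ : J ⊆ Finset.Icc 1 n),
      (1 + binVal I) + (1 + binVal J) ≤ 2 ^ n → B' n (idx n I hI) (idx n J hJ) = 0) ∧
    (∀ (I J : Finset ℕ) (hI : I ⊆ Finset.Icc 1 n) (hJ : J ⊆ Finset.Icc 1 n),
      B' n (idx n I hI) (idx n J hJ) ≠ 0 → Step n I J) := by
  obtain ⟨_, tb, _, sb, _⟩ := key n
  exact ⟨tb, sb⟩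

end AR
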